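/- For positive reals a, b with a ≠ b, √(G(a,b)·I(a,b)) < L(a,b) < (G(a,b) + I(a,b))/2. -/

import Mathlib

/-!
Write `a = c * exp (-s)` and `b = c * exp s` with `c = G(a,b)` and `s ≠ 0`. Then
`L = c * sinh s / s` and `I = c * exp (s * coth s - 1)`, so after dividing by `c` both
inequalities concern even functions of `s` alone. The left one says
`s * coth s - 1 < 2 * log (sinh s / s)`. The right one follows from `L < (2G + A)/3` and
`I > (2A + G)/3`, where `A = c * cosh s`. Each of these is proved for `s > 0` by checking that
the difference tends to `0` at `0⁺` and has positive derivative; the sign of that derivative is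
settled in turn by repeated differentiation.
-/

open Real Set Filter Topology

section DerivPos

variable {f f' : ℝ → ℝ}

theorem pos_of_deriv_pos_of_tendsto_nhdsGT_zero (hd : ∀ s, 0 < s → HasDerivAt f (f' s) s)
    (hf' : ∀ s, 0 < s → 0 < f' s) (hlim : Tendsto f (𝓝[>] 0) (𝓝 0))
    {s : ℝ} (hs : 0 < s) : 0 < f s := by
  have hmono : StrictMonoOn f (Ioi 0) := by
    refine strictMonoOn_of_deriv_pos (convex_Ioi 0)
      (fun x hx => (hd x hx).continuousAt.continuousWithinAt) fun x hx => ?_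
    rw [interior_Ioi] at hx
    rw [(hd x hx).deriv]
    exact hf' x hx
  have hhalf : 0 ≤ f (s / 2) := by
    refine le_of_tendsto hlim ?_
    filter_upwards [Ioo_mem_nhdsGT (half_pos hs)] with t ht
    exact (hmono ht.1 (mem_Ioi.2 (half_pos hs)) ht.2).le
  exact hhalf.trans_lt (hmono (mem_Ioi.2 (half_pos hs)) (mem_Ioi.2 hs) (half_lt_self hs))

theorem pos_of_deriv_pos_of_map_zero (hd : ∀ s, HasDerivAt f (f' s) s) (h0 : f 0 = 0)
    (hf' : ∀ s, 0 < s → 0 < f' s) {s : ℝ} (hs : 0 < s) : 0 < f s :=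
  pos_of_deriv_pos_of_tendsto_nhdsGT_zero (fun s _ => hd s) hf'
    (by simpa [h0] using (hd 0).continuousAt.tendsto.mono_left nhdsWithin_le_nhds) hs

end DerivPos

namespace Real

variable {u : ℝ}

theorem sinh_lt_mul_cosh (hu : 0 < u) : sinh u < u * cosh u := by
  have hd (x : ℝ) : HasDerivAt (fun x => x * cosh x - sinh x) (x * sinh x) x :=
    ((hasDerivAt_id' x).fun_mul (hasDerivAt_cosh x) |>.fun_sub (hasDerivAt_sinh x)).congr_deriv
      (by ring)
  have := pos_of_deriv_pos_of_map_zero hd (by simp) (fun x hx => mul_pos hx (sinh_pos_iff.2 hx)) hu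
  linarith

theorem two_mul_cosh_lt (hu : 0 < u) : 2 * cosh u < u * sinh u + 2 := by
  have hd (x : ℝ) :
      HasDerivAt (fun x => x * sinh x + 2 - 2 * cosh x) (x * cosh x - sinh x) x :=
    (((hasDerivAt_id' x).fun_mul (hasDerivAt_sinh x)).add_const 2
      |>.sub ((hasDerivAt_cosh x).const_mul 2)).congr_deriv (by ring)
  have := pos_of_deriv_pos_of_map_zero hd (by simp)
    (fun x hx => sub_pos.2 (sinh_lt_mul_cosh hx)) hu
  linarith

theorem three_mul_sinh_lt (hu : 0 < u) : 3 * sinh u < u * cosh u + 2 * u := by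
  have hd (x : ℝ) : HasDerivAt (fun x => x * cosh x + 2 * x - 3 * sinh x)
      (x * sinh x + 2 - 2 * cosh x) x :=
    ((hasDerivAt_id' x).fun_mul (hasDerivAt_cosh x) |>.fun_add ((hasDerivAt_id' x).const_mul 2)
      |>.sub ((hasDerivAt_sinh x).const_mul 3)).congr_deriv (by ring)
  have := pos_of_deriv_pos_of_map_zero hd (by simp)
    (fun x hx => sub_pos.2 (two_mul_cosh_lt hx)) hu
  linarith

theorem four_mul_cosh_lt (hu : 0 < u) : 4 * cosh u < u * sinh u + u ^ 2 + 4 := by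
  have hd (x : ℝ) : HasDerivAt (fun x => x * sinh x + x ^ 2 + 4 - 4 * cosh x)
      (x * cosh x + 2 * x - 3 * sinh x) x :=
    ((hasDerivAt_id' x).fun_mul (hasDerivAt_sinh x) |>.fun_add (hasDerivAt_pow 2 x) |>.add_const 4
      |>.sub ((hasDerivAt_cosh x).const_mul 4)).congr_deriv (by ring)
  have := pos_of_deriv_pos_of_map_zero hd (by simp)
    (fun x hx => sub_pos.2 (three_mul_sinh_lt hx)) hu
  linarith

theorem add_two_mul_mul_cosh_lt (hu : 0 < u) :
    u + 2 * u * cosh u < 2 * sinh u + sinh u * cosh u := by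
  have hd (x : ℝ) : HasDerivAt (fun x => 2 * sinh x + sinh x * cosh x - x - 2 * x * cosh x)
      (2 * sinh x * (sinh x - x)) x := by
    refine ((hasDerivAt_sinh x).const_mul 2
      |>.fun_add ((hasDerivAt_sinh x).fun_mul (hasDerivAt_cosh x)) |>.sub (hasDerivAt_id' x)
      |>.fun_sub (((hasDerivAt_id' x).const_mul 2).fun_mul (hasDerivAt_cosh x))).congr_deriv ?_
    linear_combination cosh_sq x
  have := pos_of_deriv_pos_of_map_zero hd (by simp) (fun x hx =>
    mul_pos (mul_pos two_pos (sinh_pos_iff.2 hx)) (sub_pos.2 (self_lt_sinh_iff.2 hx))) hu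
  linarith

theorem sinh_div_self_pos {s : ℝ} (hs : s ≠ 0) : 0 < sinh s / s := by
  rcases hs.lt_or_gt with hneg | hpos
  · exact div_pos_of_neg_of_neg (sinh_neg_iff.2 hneg) hneg
  · exact div_pos (sinh_pos_iff.2 hpos) hpos

theorem tendsto_sinh_div_self : Tendsto (fun s => sinh s / s) (𝓝[≠] 0) (𝓝 1) := by
  simpa [div_eq_inv_mul] using (hasDerivAt_sinh 0).tendsto_slope_zero

theorem tendsto_mul_cosh_div_sinh :
    Tendsto (fun s => s * cosh s / sinh s) (𝓝[≠] 0) (𝓝 1) := by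
  have h := ((continuous_cosh.tendsto 0).mono_left nhdsWithin_le_nhds).div
    tendsto_sinh_div_self one_ne_zero
  rw [cosh_zero, div_one] at h
  refine h.congr' ?_
  filter_upwards [self_mem_nhdsWithin] with s (hs : s ≠ 0)
  simp only [Pi.div_apply]
  field_simp

theorem mul_cosh_div_sinh_sub_one_lt_two_mul_log {s : ℝ} (hs : 0 < s) :
    s * cosh s / sinh s - 1 < 2 * log (sinh s / s) := by
  have hd (x : ℝ) (hx : 0 < x) :
      HasDerivAt (fun x => 2 * log (sinh x / x) - x * cosh x / sinh x + 1)
        ((x * sinh x * cosh x + x ^ 2 - 2 * sinh x ^ 2) / (x * sinh x ^ 2)) x := by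
    have hsinh : sinh x ≠ 0 := (sinh_pos_iff.2 hx).ne'
    refine (((((hasDerivAt_sinh x).fun_div (hasDerivAt_id' x) hx.ne').log
      (div_ne_zero hsinh hx.ne')).const_mul 2).sub (((hasDerivAt_id' x).fun_mul
      (hasDerivAt_cosh x)).fun_div (hasDerivAt_sinh x) hsinh)).add_const 1 |>.congr_deriv ?_
    field_simp
    linear_combination x ^ 2 * cosh_sq x
  have hlim :
      Tendsto (fun x => 2 * log (sinh x / x) - x * cosh x / sinh x + 1) (𝓝[>] 0) (𝓝 0) := by
    have := (((tendsto_sinh_div_self.log one_ne_zero).const_mul 2).sub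
      tendsto_mul_cosh_div_sinh).add_const 1
    norm_num at this
    exact this.mono_left (nhdsGT_le_nhdsNE 0)
  have := pos_of_deriv_pos_of_tendsto_nhdsGT_zero hd (fun x hx => ?_) hlim hs
  · linarith
  · -- the numerator is a quarter of `four_mul_cosh_lt` at `2 * x`
    have key := four_mul_cosh_lt (mul_pos two_pos hx)
    rw [sinh_two_mul, cosh_two_mul, cosh_sq] at key
    have := sinh_pos_iff.2 hx
    exact div_pos (by linarith) (by positivity)

theorem log_two_mul_cosh_add_one_div_three_lt {s : ℝ} (hs : 0 < s) :
    log ((2 * cosh s + 1) / 3) < s * cosh s / sinh s - 1 := by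
  have hd (x : ℝ) (hx : 0 < x) :
      HasDerivAt (fun x => x * cosh x / sinh x - 1 - log ((2 * cosh x + 1) / 3))
        ((2 * sinh x + sinh x * cosh x - x - 2 * x * cosh x) /
          (sinh x ^ 2 * (2 * cosh x + 1))) x := by
    have hsinh : sinh x ≠ 0 := (sinh_pos_iff.2 hx).ne'
    have hcosh : 2 * cosh x + 1 ≠ 0 := by positivity
    refine ((((hasDerivAt_id' x).fun_mul (hasDerivAt_cosh x)).fun_div (hasDerivAt_sinh x)
      hsinh).sub_const 1).sub ((((hasDerivAt_cosh x).const_mul 2).add_const 1).div_const 3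
      |>.log (by positivity)) |>.congr_deriv ?_
    field_simp
    linear_combination (2 * sinh x - 2 * x * cosh x - x) * cosh_sq x
  have hlim : Tendsto (fun x => x * cosh x / sinh x - 1 - log ((2 * cosh x + 1) / 3))
      (𝓝[>] 0) (𝓝 0) := by
    have hlog : Continuous fun x => log ((2 * cosh x + 1) / 3) :=
      (by fun_prop : Continuous fun x => (2 * cosh x + 1) / 3).log fun x => by positivity
    have := (tendsto_mul_cosh_div_sinh.sub_const 1).sub
      ((hlog.tendsto 0).mono_left nhdsWithin_le_nhds)
    norm_num at this
    exact this.mono_left (nhdsGT_le_nhdsNE 0)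
  have := pos_of_deriv_pos_of_tendsto_nhdsGT_zero hd (fun x hx => ?_) hlim hs
  · linarith
  · have := add_two_mul_mul_cosh_lt hx
    have := sinh_pos_iff.2 hx
    exact div_pos (by linarith) (by positivity)

theorem exp_mul_cosh_div_sinh_sub_one_lt_sq {s : ℝ} (hs : s ≠ 0) :
    exp (s * cosh s / sinh s - 1) < (sinh s / s) ^ 2 := by
  wlog hpos : 0 < s generalizing s
  · simpa [neg_div_neg_eq] using this (neg_ne_zero.2 hs) (by grind)
  calc exp (s * cosh s / sinh s - 1) < exp (2 * log (sinh s / s)) :=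
        exp_lt_exp.2 (mul_cosh_div_sinh_sub_one_lt_two_mul_log hpos)
    _ = (sinh s / s) ^ 2 := by rw [mul_comm, exp_mul, exp_log (sinh_div_self_pos hs)]; norm_cast

theorem two_mul_sinh_div_self_lt {s : ℝ} (hs : s ≠ 0) :
    2 * (sinh s / s) < 1 + exp (s * cosh s / sinh s - 1) := by
  wlog hpos : 0 < s generalizing s
  · simpa [neg_div_neg_eq] using this (neg_ne_zero.2 hs) (by grind)
  have hL : sinh s / s < (cosh s + 2) / 3 := by
    rw [div_lt_div_iff₀ hpos three_pos]
    linarith [three_mul_sinh_lt hpos]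
  have hI : (2 * cosh s + 1) / 3 < exp (s * cosh s / sinh s - 1) := by
    rw [← exp_log (by positivity : 0 < (2 * cosh s + 1) / 3)]
    exact exp_lt_exp.2 (log_two_mul_cosh_add_one_div_three_lt hpos)
  linarith

end Real

noncomputable def logMean (a b : ℝ) : ℝ := (b - a) / (log b - log a)

noncomputable def identricMean (a b : ℝ) : ℝ := (1 / exp 1) * (b ^ b / a ^ a) ^ (1 / (b - a))

theorem sub_mul_exp_neg_mul_exp (c s : ℝ) : c * exp s - c * exp (-s) = c * (2 * sinh s) := by
  rw [sinh_eq]; ring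

section

variable {c s : ℝ}

theorem logMean_mul_exp_neg_mul_exp (hc : 0 < c) :
    logMean (c * exp (-s)) (c * exp s) = c * (sinh s / s) := by
  rw [logMean, sub_mul_exp_neg_mul_exp, log_mul hc.ne' (exp_ne_zero _),
    log_mul hc.ne' (exp_ne_zero _), log_exp, log_exp, show log c + s - (log c + -s) = 2 * s by ring,
    mul_div_assoc, mul_div_mul_left _ _ two_ne_zero]

theorem identricMean_mul_exp_neg_mul_exp (hc : 0 < c) (hs : s ≠ 0) :
    identricMean (c * exp (-s)) (c * exp s) = c * exp (s * cosh s / sinh s - 1) := by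
  have ha : 0 < c * exp (-s) := by positivity
  have hb : 0 < c * exp s := by positivity
  have hsinh : sinh s ≠ 0 := sinh_ne_zero.2 hs
  have hnum : c * exp s * (log c + s) - c * exp (-s) * (log c + -s) =
      log c * (c * (2 * sinh s)) + s * (c * (2 * cosh s)) := by
    rw [sinh_eq, cosh_eq]; ring
  have hexponent : log ((c * exp s) ^ (c * exp s) / (c * exp (-s)) ^ (c * exp (-s))) *
      (1 / (c * exp s - c * exp (-s))) = log c + s * cosh s / sinh s := by
    rw [log_div (rpow_pos_of_pos hb _).ne' (rpow_pos_of_pos ha _).ne', log_rpow hb, log_rpow ha,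
      log_mul hc.ne' (exp_ne_zero _), log_mul hc.ne' (exp_ne_zero _), log_exp, log_exp, hnum,
      sub_mul_exp_neg_mul_exp]
    field_simp
  rw [identricMean, rpow_def_of_pos (by positivity), hexponent, exp_sub, exp_add, exp_log hc]
  field_simp

end

theorem exists_eq_mul_exp_neg_and_eq_mul_exp {a b : ℝ} (ha : 0 < a) (hb : 0 < b) (hab : a ≠ b) :
    ∃ c s, 0 < c ∧ s ≠ 0 ∧ a = c * exp (-s) ∧ b = c * exp s := by
  refine ⟨exp ((log a + log b) / 2), (log b - log a) / 2, exp_pos _, ?_, ?_, ?_⟩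
  · intro h
    exact hab (log_injOn_pos ha hb (by linarith))
  · rw [← exp_add]
    convert (exp_log ha).symm using 2
    ring
  · rw [← exp_add]
    convert (exp_log hb).symm using 2
    ring

theorem sqrt_GI_lt_L_lt_avg_GI (a b : ℝ) (ha : 0 < a) (hb : 0 < b) (hab : a ≠ b) :
    Real.sqrt (Real.sqrt (a * b) *
        ((1 / Real.exp 1) * (b ^ b / a ^ a) ^ (1 / (b - a)))) <
      (b - a) / (Real.log b - Real.log a) ∧
    (b - a) / (Real.log b - Real.log a) <
      (Real.sqrt (a * b) + (1 / Real.exp 1) * (b ^ b / a ^ a) ^ (1 / (b - a))) / 2 := by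
  change √(√(a * b) * identricMean a b) < logMean a b ∧
    logMean a b < (√(a * b) + identricMean a b) / 2
  obtain ⟨c, s, hc, hs, rfl, rfl⟩ := exists_eq_mul_exp_neg_and_eq_mul_exp ha hb hab
  have hG : √(c * exp (-s) * (c * exp s)) = c := by
    rw [mul_mul_mul_comm, ← exp_add, neg_add_cancel, exp_zero, mul_one, sqrt_mul_self hc.le]
  rw [hG, logMean_mul_exp_neg_mul_exp hc, identricMean_mul_exp_neg_mul_exp hc hs]
  constructor
  · rw [← mul_assoc, sqrt_mul (mul_self_nonneg c), sqrt_mul_self hc.le]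
    gcongr
    exact (sqrt_lt' (sinh_div_self_pos hs)).2 (exp_mul_cosh_div_sinh_sub_one_lt_sq hs)
  · nlinarith [two_mul_sinh_div_self_lt hs]
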